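/- Let $n \geq 3$ and define $g \colon \mathbb{R}^{n-1}\times\mathbb{R} \to \mathbb{R}$ by $g(x', x_n) = |x'|^{-(n-1)}|\log_2(1/|x'|)|^{-n/(n+1)}$ if $|x_n| \leq C|x'|^2$ and $0 < |x'| \leq 1/2$, and $g(x',x_n) = 0$ otherwise, where $C \geq 1$ is a fixed constant. Then $g \in L^p(\mathbb{R}^n)$ for every $1 \leq p \leq \frac{n+1}{n-1}$. -/

import Mathlib

open MeasureTheory Set Metric
open scoped ENNReal


lemma lintegral_fun_norm_addHaar_aux {E : Type*} [NormedAddCommGroup E] [NormedSpace ℝ E]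
    [MeasurableSpace E] [BorelSpace E] [Nontrivial E] (μ : Measure E) [FiniteDimensional ℝ E]
    [μ.IsAddHaarMeasure] (f : ℝ → ℝ≥0∞) (hf : Measurable f) :
    ∫⁻ x, f ‖x‖ ∂μ = μ.toSphere univ *
      ∫⁻ y in Ioi (0:ℝ), ENNReal.ofReal (y ^ (Module.finrank ℝ E - 1)) * f y := calc
  ∫⁻ x, f ‖x‖ ∂μ = ∫⁻ x : ({(0)}ᶜ : Set E), f ‖x.1‖ ∂(μ.comap (↑)) := by
    rw [lintegral_subtype_comap (measurableSet_singleton _).compl fun x ↦ f ‖x‖,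
      MeasureTheory.restrict_compl_singleton]
  _ = ∫⁻ x : sphere (0 : E) 1 × Ioi (0 : ℝ), f x.2
      ∂μ.toSphere.prod (.volumeIoiPow (Module.finrank ℝ E - 1)) :=
    by
      refine (lintegral_congr fun x => ?_).trans
        (μ.measurePreserving_homeomorphUnitSphereProd.lintegral_comp
        (hf.comp (measurable_subtype_coe.comp measurable_snd)))
      simp [Function.comp, homeomorphUnitSphereProd, homeomorphSphereProd]
  _ = μ.toSphere univ * ∫⁻ x : Ioi (0 : ℝ), f x ∂(Measure.volumeIoiPow (Module.finrank ℝ E - 1)) := by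
    rw [← lintegral_map (f := fun y : Ioi (0:ℝ) ↦ f ↑y) (hf.comp measurable_subtype_coe)
      measurable_snd, Measure.map_snd_prod, lintegral_smul_measure, smul_eq_mul]
  _ = _ := by
    rw [Measure.volumeIoiPow,
      lintegral_withDensity_eq_lintegral_mul _ (by fun_prop)
        (g := fun y : Ioi (0:ℝ) ↦ f ↑y) (hf.comp measurable_subtype_coe),
      ]
    simp only [Pi.mul_apply]
    rw [lintegral_subtype_comap measurableSet_Ioi
      (fun a : ℝ ↦ ENNReal.ofReal (a ^ (Module.finrank ℝ E - 1)) * f a)]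

lemma oneDim_integrable {q : ℝ} (hq : 1 < q) :
    IntegrableOn (fun y : ℝ => y⁻¹ * Real.logb 2 (1/y) ^ (-q)) (Set.Ioo 0 (1/2)) := by
  have hl2 : (0:ℝ) < Real.log 2 := Real.log_pos one_lt_two
  have himg : (fun u => Real.exp (-u)) '' Ioi (Real.log 2) = Ioo (0:ℝ) (1/2) := by
    ext y
    constructor
    · rintro ⟨u, hu, rfl⟩
      refine ⟨Real.exp_pos _, ?_⟩
      have : Real.exp (-u) < Real.exp (-(Real.log 2)) :=
        Real.exp_lt_exp.2 (by simpa using hu)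
      simpa [Real.exp_neg, Real.exp_log, one_div] using this
    · rintro ⟨h0, h2⟩
      refine ⟨-(Real.log y), ?_, by simp [Real.exp_log h0]⟩
      have : Real.log y < Real.log 2⁻¹ := Real.log_lt_log h0 (by simpa [one_div] using h2)
      simp only [mem_Ioi]
      rw [Real.log_inv] at this
      linarith
  have hderiv : ∀ u ∈ Ioi (Real.log 2),
      HasDerivWithinAt (fun u => Real.exp (-u)) (-Real.exp (-u)) (Ioi (Real.log 2)) u := by
    intro u _
    have h := ((Real.hasDerivAt_exp (-u)).comp u (hasDerivAt_neg u))
    have h2 := h.hasDerivWithinAt (s := Ioi (Real.log 2))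
    rw [mul_neg_one] at h2
    exact h2
  have hinj : InjOn (fun u => Real.exp (-u)) (Ioi (Real.log 2)) :=
    (Real.exp_injective.comp neg_injective).injOn
  have base : IntegrableOn
      (fun u : ℝ => |(-Real.exp (-u))| •
        ((Real.exp (-u))⁻¹ * Real.logb 2 (1/Real.exp (-u)) ^ (-q))) (Ioi (Real.log 2)) := by
    refine IntegrableOn.congr_fun
      (((integrableOn_Ioi_rpow_of_lt (a := -q) (by linarith) hl2).mul_const
      ((Real.log 2) ^ q))) ?_ measurableSet_Ioi
    intro u hu
    have hu0 : 0 < u := lt_trans hl2 hu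
    have h1 : (1 : ℝ)/Real.exp (-u) = Real.exp u := by
      rw [Real.exp_neg, one_div, inv_inv]
    have h2 : Real.logb 2 (Real.exp u) = u / Real.log 2 := by
      rw [Real.logb, Real.log_exp]
    have h3 : (u / Real.log 2) ^ (-q) = u ^ (-q) * (Real.log 2) ^ q := by
      rw [div_eq_mul_inv, Real.mul_rpow hu0.le (by positivity),
        ← Real.rpow_neg_one (Real.log 2), ← Real.rpow_mul hl2.le]
      norm_num
    dsimp only
    rw [h1, h2, h3, abs_neg, abs_of_pos (Real.exp_pos _), smul_eq_mul, Real.exp_neg, inv_inv,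
      ← mul_assoc, ← mul_assoc, inv_mul_cancel₀ (Real.exp_pos u).ne']
    ring
  rw [← himg]
  exact (integrableOn_image_iff_integrableOn_abs_deriv_smul measurableSet_Ioi hderiv hinj _).mpr
    base

theorem knapp_function_Lp (n : ℕ) (hn : 3 ≤ n) (C : ℝ) (hC : 1 ≤ C)
    (p : ℝ) (hp1 : 1 ≤ p) (hp2 : p ≤ (n + 1) / (n - 1)) :
    MemLp (fun x : EuclideanSpace ℝ (Fin (n - 1)) × ℝ =>
        if |x.2| ≤ C * ‖x.1‖ ^ 2 ∧ 0 < ‖x.1‖ ∧ ‖x.1‖ ≤ 1 / 2 then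
          ‖x.1‖ ^ (-((n : ℝ) - 1)) * |Real.logb 2 (1 / ‖x.1‖)| ^ (-(n : ℝ) / (n + 1))
        else 0)
      (ENNReal.ofReal p) volume := by
  have hn3 : (3:ℝ) ≤ (n:ℝ) := by exact_mod_cast hn
  have hn1 : (0:ℝ) < (n:ℝ) - 1 := by linarith
  have hn1' : (0:ℝ) < (n:ℝ) + 1 := by linarith
  set E := EuclideanSpace ℝ (Fin (n - 1)) with hE
  haveI : Nonempty (Fin (n - 1)) := ⟨⟨0, by omega⟩⟩
  haveI : Nontrivial E := inferInstance
  set q : ℝ := (n:ℝ) / ((n:ℝ) - 1) with hqdef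
  have hq : 1 < q := (one_lt_div hn1).2 (by linarith)
  set p₀ : ℝ := ((n:ℝ) + 1) / ((n:ℝ) - 1) with hp₀def
  have hpp₀ : p ≤ p₀ := hp2
  have hp0 : 0 < p := by linarith
  set ψ : ℝ → ℝ := fun s => s ^ (-((n:ℝ) + 1)) * Real.logb 2 (1/s) ^ (-q) with hψdef
  have hrpowc : ∀ c : ℝ, Measurable fun y : ℝ => y ^ c := fun c => by fun_prop
  have hlogb : Measurable fun s : ℝ => Real.logb 2 (1/s) :=
    (Real.measurable_log.comp (measurable_const.div measurable_id)).div_const (Real.log 2)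
  have hψmeas : Measurable ψ := (hrpowc _).mul ((hrpowc _).comp hlogb)
  have hcond : MeasurableSet
      {x : E × ℝ | |x.2| ≤ C * ‖x.1‖ ^ 2 ∧ 0 < ‖x.1‖ ∧ ‖x.1‖ ≤ 1 / 2} := by
    refine MeasurableSet.inter ?_ (MeasurableSet.inter ?_ ?_)
    · exact measurableSet_le measurable_snd.abs ((measurable_fst.norm.pow_const 2).const_mul C)
    · exact measurableSet_lt measurable_const measurable_fst.norm
    · exact measurableSet_le measurable_fst.norm measurable_const
  have hv : Measurable fun x : E × ℝ =>
      ‖x.1‖ ^ (-((n : ℝ) - 1)) * |Real.logb 2 (1 / ‖x.1‖)| ^ (-(n : ℝ) / (n + 1)) :=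
    ((hrpowc _).comp measurable_fst.norm).mul
      ((hrpowc _).comp (hlogb.comp measurable_fst.norm).abs)
  have hFMeas : Measurable (fun x : E × ℝ =>
      if |x.2| ≤ C * ‖x.1‖ ^ 2 ∧ 0 < ‖x.1‖ ∧ ‖x.1‖ ≤ 1 / 2 then
        ‖x.1‖ ^ (-((n : ℝ) - 1)) * |Real.logb 2 (1 / ‖x.1‖)| ^ (-(n : ℝ) / (n + 1))
      else 0) := Measurable.ite hcond hv measurable_const
  refine ⟨hFMeas.aestronglyMeasurable, ?_⟩
  rw [eLpNorm_eq_lintegral_rpow_enorm_toReal (by simp [ENNReal.ofReal_eq_zero]; linarith)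
    ENNReal.ofReal_ne_top, ENNReal.toReal_ofReal hp0.le]
  refine ENNReal.rpow_lt_top_of_nonneg (by positivity) (ne_of_lt ?_)
  set H : E × ℝ → ℝ≥0∞ := fun x =>
    if |x.2| ≤ C * ‖x.1‖ ^ 2 ∧ 0 < ‖x.1‖ ∧ ‖x.1‖ ≤ 1 / 2 then ENNReal.ofReal (ψ ‖x.1‖) else 0
    with hHdef
  have hHmeas : Measurable H :=
    Measurable.ite hcond ((hψmeas.comp measurable_fst.norm).ennreal_ofReal) measurable_const
  have hbound : ∀ x : E × ℝ,
      (‖(if |x.2| ≤ C * ‖x.1‖ ^ 2 ∧ 0 < ‖x.1‖ ∧ ‖x.1‖ ≤ 1 / 2 then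
          ‖x.1‖ ^ (-((n : ℝ) - 1)) * |Real.logb 2 (1 / ‖x.1‖)| ^ (-(n : ℝ) / (n + 1))
        else 0)‖₊ : ℝ≥0∞) ^ p ≤ H x := by
    intro x
    by_cases hx : |x.2| ≤ C * ‖x.1‖ ^ 2 ∧ 0 < ‖x.1‖ ∧ ‖x.1‖ ≤ 1 / 2
    · set s := ‖x.1‖ with hs
      obtain ⟨-, hs0, hs12⟩ := id hx
      set L := Real.logb 2 (1/s) with hL
      have h2s : (2:ℝ) ≤ 1/s := by
        rw [le_div_iff₀ hs0]; linarith
      have hL1 : 1 ≤ L := by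
        have := Real.logb_le_logb_of_le (b := 2) one_lt_two (by norm_num) h2s
        rwa [Real.logb_self_eq_one one_lt_two] at this
      have hLpos : 0 < L := by linarith
      have hLabs : |L| = L := abs_of_pos hLpos
      set c : ℝ := s ^ (-((n : ℝ) - 1)) * L ^ (-(n : ℝ) / (n + 1)) with hc
      have hcpos : 0 < c := by positivity
      have hc1 : 1 ≤ c := by
        have hBpos : (0:ℝ) < L ^ ((n:ℝ) / ((n:ℝ) + 1)) := Real.rpow_pos_of_pos hLpos _
        have hB_le_L : L ^ ((n:ℝ) / ((n:ℝ) + 1)) ≤ L := by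
          nth_rewrite 2 [← Real.rpow_one L]
          exact Real.rpow_le_rpow_of_exponent_le hL1 (by rw [div_le_one hn1']; linarith)
        have hl2 : (0.6931471803 : ℝ) < Real.log 2 := Real.log_two_gt_d9
        have hL_le : L ≤ 1/s^2 := by
          have hlog : Real.log (1/s) ≤ 1/s := by
            have := Real.log_le_sub_one_of_pos (x := 1/s) (by positivity)
            linarith
          have key : (1:ℝ)/s ≤ 1/s^2 * Real.log 2 := by
            have he : 1/s^2 * Real.log 2 = Real.log 2 / s^2 := by ring
            rw [he, div_le_div_iff₀ hs0 (by positivity)]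
            nlinarith
          rw [hL, Real.logb, div_le_iff₀ (by linarith)]
          calc Real.log (1/s) ≤ 1/s := hlog
          _ ≤ 1/s^2 * Real.log 2 := key
        have h1s2 : (1:ℝ)/s^2 = s ^ (-2:ℝ) := by
          rw [Real.rpow_neg hs0.le, one_div]
          congr 1
          rw [← Real.rpow_natCast s 2]
          norm_num
        have hA : s ^ (-2:ℝ) ≤ s ^ (-((n:ℝ) - 1)) :=
          Real.rpow_le_rpow_of_exponent_ge hs0 (by linarith) (by linarith)
        have key : L ^ ((n:ℝ) / ((n:ℝ) + 1)) ≤ s ^ (-((n:ℝ) - 1)) := by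
          calc L ^ ((n:ℝ) / ((n:ℝ) + 1)) ≤ L := hB_le_L
          _ ≤ 1/s^2 := hL_le
          _ = s ^ (-2:ℝ) := h1s2
          _ ≤ _ := hA
        rw [hc, neg_div, Real.rpow_neg hLpos.le, ← div_eq_mul_inv, one_le_div hBpos]
        exact key
      have hcalc : c ^ p₀ = ψ s := by
        rw [hc, Real.mul_rpow (by positivity) (by positivity),
          ← Real.rpow_mul hs0.le, ← Real.rpow_mul hLpos.le, hψdef]
        have e1 : (-((n:ℝ) - 1)) * p₀ = -((n:ℝ) + 1) := by
          rw [hp₀def]; field_simp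
        have e2 : (-(n:ℝ) / ((n:ℝ) + 1)) * p₀ = -q := by
          rw [hp₀def, hqdef]; field_simp
        rw [e1, e2]
      calc (‖(if |x.2| ≤ C * ‖x.1‖ ^ 2 ∧ 0 < ‖x.1‖ ∧ ‖x.1‖ ≤ 1 / 2 then
          ‖x.1‖ ^ (-((n : ℝ) - 1)) * |Real.logb 2 (1 / ‖x.1‖)| ^ (-(n : ℝ) / (n + 1))
        else 0)‖₊ : ℝ≥0∞) ^ p
          = ENNReal.ofReal c ^ p := by
            rw [if_pos hx, ← hs, ← hL, hLabs, ← hc, ← enorm_eq_nnnorm, Real.enorm_eq_ofReal hcpos.le]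
        _ ≤ ENNReal.ofReal c ^ p₀ :=
            ENNReal.rpow_le_rpow_of_exponent_le (by simpa [ENNReal.one_le_ofReal] using hc1) hpp₀
        _ = ENNReal.ofReal (c ^ p₀) := ENNReal.ofReal_rpow_of_pos hcpos
        _ = H x := by
            simp only [hHdef]
            rw [if_pos hx]
            exact congrArg ENNReal.ofReal hcalc
    · rw [if_neg hx]
      simp [hHdef, hx, ENNReal.zero_rpow_of_pos hp0]
  refine lt_of_le_of_lt (lintegral_mono hbound) ?_
  set Φ : ℝ → ℝ≥0∞ := fun s =>
    (Ioc (0:ℝ) (1/2)).indicator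
      (fun s => ENNReal.ofReal (ψ s) * ENNReal.ofReal (2 * (C * s ^ 2))) s with hΦdef
  have hΦmeas : Measurable Φ :=
    (Measurable.indicator (hψmeas.ennreal_ofReal.mul (by fun_prop)) measurableSet_Ioc)
  have hinner : ∀ a : E, ∫⁻ t, H (a, t) = Φ ‖a‖ := by
    intro a
    by_cases hP : 0 < ‖a‖ ∧ ‖a‖ ≤ 1/2
    · have hIcc : ∀ t : ℝ, H (a, t) =
          (Icc (-(C * ‖a‖ ^ 2)) (C * ‖a‖ ^ 2)).indicator
            (fun _ => ENNReal.ofReal (ψ ‖a‖)) t := by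
        intro t
        simp only [hHdef, Set.indicator_apply, Set.mem_Icc]
        exact if_congr ((and_iff_left hP).trans abs_le) rfl rfl
      rw [lintegral_congr hIcc, lintegral_indicator measurableSet_Icc, setLIntegral_const,
        Real.volume_Icc]
      simp only [hΦdef, Set.indicator_apply, mem_Ioc, hP.1, hP.2, and_self, if_true]
      rw [show C * ‖a‖ ^ 2 - -(C * ‖a‖ ^ 2) = 2 * (C * ‖a‖ ^ 2) by ring]
    · have hz : ∀ t : ℝ, H (a, t) = 0 := by
        intro t
        simp only [hHdef]
        exact if_neg (fun h => hP h.2)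
      rw [lintegral_congr hz, lintegral_zero]
      simp only [hΦdef, Set.indicator_apply, mem_Ioc]
      rw [if_neg hP]
  rw [Measure.volume_eq_prod, lintegral_prod _ hHmeas.aemeasurable]
  simp_rw [hinner]
  rw [lintegral_fun_norm_addHaar_aux volume Φ hΦmeas]
  refine ENNReal.mul_lt_top (measure_lt_top _ _) ?_
  have hrank : Module.finrank ℝ E - 1 = n - 1 - 1 :=
    congrArg (· - 1) (finrank_euclideanSpace_fin (𝕜 := ℝ) (n := n - 1))
  have hpt : ∀ y ∈ Ioi (0:ℝ),
      ENNReal.ofReal (y ^ (Module.finrank ℝ E - 1)) * Φ y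
        = (Ioc (0:ℝ) (1/2)).indicator
            (fun y => ENNReal.ofReal (2 * C * (y⁻¹ * Real.logb 2 (1/y) ^ (-q)))) y := by
    intro y hy
    have hy0 : (0:ℝ) < y := hy
    by_cases hmem : y ∈ Ioc (0:ℝ) (1/2)
    · rw [hΦdef]
      simp only [Set.indicator_of_mem hmem]
      have h2C : (0:ℝ) ≤ 2 * (C * y ^ 2) := by nlinarith [sq_nonneg y]
      rw [← ENNReal.ofReal_mul' h2C, ← ENNReal.ofReal_mul (pow_nonneg hy0.le _)]
      congr 1
      have epow : (y : ℝ) ^ (Module.finrank ℝ E - 1 : ℕ) = y ^ ((n:ℝ) - 2) := by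
        rw [hrank, ← Real.rpow_natCast y (n - 1 - 1)]
        congr 1
        push_cast [Nat.cast_sub (by omega : 1 ≤ n - 1), Nat.cast_sub (by omega : 1 ≤ n)]
        ring
      have e2 : (y:ℝ) ^ (2:ℕ) = y ^ (2:ℝ) := by
        rw [← Real.rpow_natCast y 2]; norm_num
      rw [hψdef, epow]
      have estep : y ^ ((n:ℝ) - 2) * ((fun s => s ^ (-((n:ℝ) + 1)) *
            Real.logb 2 (1/s) ^ (-q)) y * (2 * (C * y ^ (2:ℕ)))) =
          (y ^ ((n:ℝ) - 2) * y ^ (-((n:ℝ) + 1)) * y ^ (2:ℝ)) *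
            (2 * C * Real.logb 2 (1/y) ^ (-q)) := by
        simp only
        rw [e2]; ring
      rw [estep, ← Real.rpow_add hy0, ← Real.rpow_add hy0,
        show (n:ℝ) - 2 + (-((n:ℝ) + 1)) + 2 = -1 by ring, Real.rpow_neg_one]
      ring
    · rw [hΦdef]
      simp only [Set.indicator_of_notMem hmem, mul_zero]
  calc ∫⁻ y in Ioi (0:ℝ), ENNReal.ofReal (y ^ (Module.finrank ℝ E - 1)) * Φ y
      = ∫⁻ y in Ioi (0:ℝ), (Ioc (0:ℝ) (1/2)).indicator
          (fun y => ENNReal.ofReal (2 * C * (y⁻¹ * Real.logb 2 (1/y) ^ (-q)))) y :=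
        setLIntegral_congr_fun measurableSet_Ioi hpt
    _ = ∫⁻ y in Ioc (0:ℝ) (1/2),
          ENNReal.ofReal (2 * C * (y⁻¹ * Real.logb 2 (1/y) ^ (-q))) := by
        rw [lintegral_indicator measurableSet_Ioc, Measure.restrict_restrict measurableSet_Ioc,
          Set.inter_eq_left.2 Ioc_subset_Ioi_self]
    _ = ∫⁻ y in Ioo (0:ℝ) (1/2),
          ENNReal.ofReal (2 * C * (y⁻¹ * Real.logb 2 (1/y) ^ (-q))) := by
        rw [← Measure.restrict_congr_set Ioo_ae_eq_Ioc]
    _ < ⊤ := by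
        have hint : Integrable (fun y : ℝ => 2 * C * (y⁻¹ * Real.logb 2 (1/y) ^ (-q)))
            (volume.restrict (Ioo (0:ℝ) (1/2))) := (oneDim_integrable hq).const_mul _
        exact hint.lintegral_lt_top
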